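/- (Sub-moment minimality of the two-value profile, binary case) Let m₁ ≥ m₂ ≥ 1 be natural numbers, N = m₁ + m₂, and consider the binary alphabet {a₁, a₂} with multiplicities m₁, m₂. Let a be either symbol, with multiplicity m(a), and suppose m(a) ∤ N; set ℓ = ⌊N/m(a)⌋ and u = ⌈N/m(a)⌉. Then (i) there exists an admissible cycle C : ZMod N → {a₁, a₂} in which exactly m(a)·u − N instances of a have distance ℓ and exactly N − m(a)·ℓ instances of a have distance u; and (ii) any admissible cycle C with this property minimizes ∑_{j : C(j) = a} Δ_C(j)² over all admissible cycles, i.e., for every admissible cycle C', ∑_{j : C'(j) = a} Δ_{C'}(j)² ≥ ∑_{j : C(j) = a} Δ_C(j)². -/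

import Mathlib

open Finset

/-- The distance from position `j` to the next occurrence of the same symbol:
the least positive `d` with `C (j + d) = C j`. -/
noncomputable def cycleDist {N : ℕ} {A : Type*} (C : ZMod N → A) (j : ZMod N) : ℕ :=
  sInf {d : ℕ | 0 < d ∧ C (j + (d : ZMod N)) = C j}

/-- A cycle is admissible for multiplicities `m` if every fiber has the prescribed size. -/
def Admissible {N : ℕ} [NeZero N] {A : Type*} [Fintype A] [DecidableEq A]
    (m : A → ℕ) (C : ZMod N → A) : Prop :=
  ∀ a : A, (Finset.univ.filter (fun j => C j = a)).card = m a

/-- The mean of a cycle. -/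
noncomputable def cycleMean {N : ℕ} [NeZero N] {A : Type*} (C : ZMod N → A) : ℚ :=
  (∑ j : ZMod N, (cycleDist C j : ℚ)) / N

/-- The second (raw) moment of a cycle. -/
noncomputable def cycleMoment2 {N : ℕ} [NeZero N] {A : Type*} (C : ZMod N → A) : ℚ :=
  (∑ j : ZMod N, (cycleDist C j : ℚ) ^ 2) / N

/-- The variance of a cycle. -/
noncomputable def cycleVariance {N : ℕ} [NeZero N] {A : Type*} (C : ZMod N → A) : ℚ :=
  (∑ j : ZMod N, ((cycleDist C j : ℚ) - cycleMean C) ^ 2) / N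

/-!
The occurrences of a symbol `a` cut the cycle into arcs whose lengths are the distances
`Δ_C(j)`, `C j = a`, so these `m(a)` distances always sum to `N`. The chord
`x ↦ (2ℓ + 1) x - ℓ (ℓ + 1)` of `x ↦ x²` through `ℓ` and `ℓ + 1` lies below `x²` at every integer
and meets it exactly at `ℓ` and `ℓ + 1`. Summing it over the occurrences of `a` bounds the sum of
squared distances of every admissible cycle from below by `(2ℓ + 1) N - m(a) ℓ (ℓ + 1)`, with
equality when all distances are `ℓ` or `ℓ + 1`. Such a cycle exists: with `r = N % m(a)`, put `a`
at the positions `i ℓ + min i r` for `i < m(a)`.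
-/

lemma natCast_injOn_Iio (N : ℕ) : Set.InjOn (Nat.cast : ℕ → ZMod N) (Set.Iio N) :=
  fun k hk k' hk' h => by
    simpa [ZMod.natCast_eq_natCast_iff', Nat.mod_eq_of_lt hk, Nat.mod_eq_of_lt hk'] using h

lemma Finset.forall_or_of_card_filter_add_card_filter_eq {ι : Type*} {s : Finset ι}
    {p q : ι → Prop} [DecidablePred p] [DecidablePred q] (hpq : ∀ i ∈ s, p i → ¬ q i)
    (h : #(s.filter p) + #(s.filter q) = #s) : ∀ i ∈ s, p i ∨ q i := by
  classical
  rw [← card_union_of_disjoint (disjoint_filter.2 hpq), ← filter_or] at h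
  exact card_filter_eq_iff.1 h

lemma chord_le_sq (ℓ : ℕ) (x : ℤ) : (2 * ℓ + 1) * x - ℓ * (ℓ + 1) ≤ x ^ 2 := by
  rcases le_or_gt x ℓ with h | h <;> nlinarith

lemma sum_sq_le_sum_sq_of_forall_eq_or_eq {ι κ : Type*} {s : Finset ι} {t : Finset κ}
    {f : ι → ℕ} {g : κ → ℕ} (ℓ : ℕ) (hcard : #s = #t) (hsum : ∑ i ∈ s, f i = ∑ k ∈ t, g k)
    (hf : ∀ i ∈ s, f i = ℓ ∨ f i = ℓ + 1) : ∑ i ∈ s, f i ^ 2 ≤ ∑ k ∈ t, g k ^ 2 := by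
  have hsum' : ∑ i ∈ s, (f i : ℤ) = ∑ k ∈ t, (g k : ℤ) := by exact_mod_cast hsum
  zify
  calc ∑ i ∈ s, (f i : ℤ) ^ 2 = ∑ i ∈ s, ((2 * ℓ + 1) * (f i : ℤ) - ℓ * (ℓ + 1)) := by
        refine sum_congr rfl fun i hi => ?_
        rcases hf i hi with h | h <;> rw [h] <;> push_cast <;> ring
    _ = ∑ k ∈ t, ((2 * ℓ + 1) * (g k : ℤ) - ℓ * (ℓ + 1)) := by
        rw [sum_sub_distrib, sum_sub_distrib, sum_const, sum_const, ← mul_sum, ← mul_sum, hsum',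
          hcard]
    _ ≤ ∑ k ∈ t, (g k : ℤ) ^ 2 := sum_le_sum fun k _ => chord_le_sq ℓ _

section cycleDist

variable {N : ℕ} {A : Type*} (C : ZMod N → A)

lemma cycleDist_spec [NeZero N] (j : ZMod N) : 0 < cycleDist C j ∧ C (j + cycleDist C j) = C j :=
  Nat.sInf_mem (⟨N, NeZero.pos N, by simp⟩ : {d : ℕ | 0 < d ∧ C (j + d) = C j}.Nonempty)

lemma cycleDist_pos [NeZero N] (j : ZMod N) : 0 < cycleDist C j := (cycleDist_spec C j).1

lemma apply_add_cycleDist [NeZero N] (j : ZMod N) : C (j + cycleDist C j) = C j :=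
  (cycleDist_spec C j).2

lemma cycleDist_le {j : ZMod N} {d : ℕ} (hd : 0 < d) (h : C (j + d) = C j) : cycleDist C j ≤ d :=
  Nat.sInf_le ⟨hd, h⟩

lemma cycleDist_le_card [NeZero N] (j : ZMod N) : cycleDist C j ≤ N :=
  cycleDist_le C (NeZero.pos N) (by simp)

lemma cycleDist_eq_of [NeZero N] {j : ZMod N} {d : ℕ} (hd : 0 < d) (h : C (j + d) = C j)
    (hmin : ∀ k : ℕ, 0 < k → k < d → C (j + k) ≠ C j) : cycleDist C j = d :=
  (cycleDist_le C hd h).antisymm <| not_lt.1 fun hlt =>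
    hmin _ (cycleDist_pos C j) hlt (apply_add_cycleDist C j)

noncomputable def gapInterval (j : ZMod N) : Finset (ZMod N) :=
  (range (cycleDist C j)).image fun k : ℕ => j + k

lemma card_gapInterval [NeZero N] (j : ZMod N) : #(gapInterval C j) = cycleDist C j := by
  rw [gapInterval, card_image_of_injOn, card_range]
  intro k hk k' hk' h
  simp only [coe_range, Set.mem_Iio] at hk hk'
  exact natCast_injOn_Iio N (hk.trans_le (cycleDist_le_card C j))
    (hk'.trans_le (cycleDist_le_card C j)) (add_left_cancel h)

lemma exists_mem_gapInterval [NeZero N] (s₀ j : ZMod N) :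
    ∃ s, C s = C s₀ ∧ j ∈ gapInterval C s := by
  classical
  have hk : ∃ k : ℕ, C (j - k) = C s₀ := ⟨(j - s₀).val, by simp⟩
  -- `j` lies in the arc of the last occurrence of `C s₀` at or before it
  set k := Nat.find hk
  refine ⟨j - k, Nat.find_spec hk, mem_image.2 ⟨k, mem_range.2 ?_, sub_add_cancel j k⟩⟩
  by_contra! hle
  have hback : C (j - (k - cycleDist C (j - k) : ℕ)) = C s₀ := by
    rw [Nat.cast_sub hle, sub_sub_eq_add_sub, add_sub_right_comm, apply_add_cycleDist C,
      Nat.find_spec hk]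
  have := Nat.find_min' hk hback
  have := cycleDist_pos C (j - k)
  omega

lemma eq_of_add_eq_add_of_lt_cycleDist {s s' : ZMod N} {k k' : ℕ} (hC : C s = C s')
    (hk : k < cycleDist C s) (hk' : k' ≤ k) (h : s + k = s' + k') : s = s' := by
  obtain rfl | hlt := hk'.eq_or_lt
  · exact add_right_cancel h
  · have hs' : s + ((k - k' : ℕ) : ZMod N) = s' := by
      rw [Nat.cast_sub hk']
      linear_combination h
    have := cycleDist_le C (Nat.sub_pos_of_lt hlt) (by rw [hs', hC])
    omega

lemma disjoint_gapInterval {s s' : ZMod N} (hC : C s = C s') (hne : s ≠ s') :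
    Disjoint (gapInterval C s) (gapInterval C s') := by
  rw [disjoint_left]
  rintro j hj hj'
  simp only [gapInterval, mem_image, mem_range] at hj hj'
  obtain ⟨k, hk, rfl⟩ := hj
  obtain ⟨k', hk', h⟩ := hj'
  rcases le_total k' k with hle | hle
  · exact hne (eq_of_add_eq_add_of_lt_cycleDist C hC hk hle h.symm)
  · exact hne (eq_of_add_eq_add_of_lt_cycleDist C hC.symm hk' hle h).symm

theorem sum_cycleDist_filter_eq [NeZero N] [DecidableEq A] {a : A}
    (ha : (univ.filter (C · = a)).Nonempty) : ∑ j ∈ univ.filter (C · = a), cycleDist C j = N := by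
  obtain ⟨s₀, hs₀⟩ := ha
  have hcover : (univ.filter (C · = a)).biUnion (gapInterval C) = univ :=
    eq_univ_of_forall fun j => by
      obtain ⟨s, hs, hj⟩ := exists_mem_gapInterval C s₀ j
      exact mem_biUnion.2 ⟨s, by simpa [hs] using hs₀, hj⟩
  have hdisj : (univ.filter (C · = a) : Set (ZMod N)).PairwiseDisjoint (gapInterval C) :=
    fun s hs s' hs' hne => disjoint_gapInterval C (by simp_all) hne
  simp_rw [← card_gapInterval C, ← card_biUnion hdisj, hcover, card_univ, ZMod.card]

end cycleDist

section markCycle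

variable {N : ℕ} {A : Type*} {p : ℕ → ℕ} {m : ℕ} {a b : A}

def markCycle (p : ℕ → ℕ) (m : ℕ) (a b : A) : ZMod N → A :=
  fun j => if ∃ i < m, (p i : ZMod N) = j then a else b

lemma markCycle_eq_left_iff (hab : a ≠ b) {j : ZMod N} :
    markCycle p m a b j = a ↔ ∃ i < m, (p i : ZMod N) = j := by
  unfold markCycle
  split_ifs with h <;> simp [h, hab.symm]

lemma filter_markCycle_eq_left [NeZero N] [DecidableEq A] (hab : a ≠ b) :
    univ.filter (markCycle (N := N) p m a b · = a) = (range m).image fun i => (p i : ZMod N) := by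
  ext j
  simp [markCycle_eq_left_iff hab]

lemma injOn_natCast_of_strictMono (hp : StrictMono p) (hpm : p m = N) :
    Set.InjOn (fun i => (p i : ZMod N)) (range m) :=
  fun _ hi _ hi' h => hp.injective <| natCast_injOn_Iio N
    (hpm ▸ hp (mem_range.1 hi)) (hpm ▸ hp (mem_range.1 hi')) h

lemma cycleDist_markCycle [NeZero N] (hab : a ≠ b) (hp : StrictMono p) (hp0 : p 0 = 0)
    (hpm : p m = N) {i : ℕ} (hi : i < m) :
    cycleDist (markCycle p m a b) (p i : ZMod N) = p (i + 1) - p i := by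
  have hstep : p i < p (i + 1) := hp (Nat.lt_succ_self i)
  have hnext : p (i + 1) ≤ N := hpm ▸ hp.monotone hi
  have hcast : ∀ k : ℕ, (p i : ZMod N) + k = ((p i + k : ℕ) : ZMod N) := fun k => by push_cast; rfl
  have hCi : markCycle p m a b (p i : ZMod N) = a := (markCycle_eq_left_iff hab).2 ⟨i, hi, rfl⟩
  apply cycleDist_eq_of _ (Nat.sub_pos_of_lt hstep)
  · rw [hcast, Nat.add_sub_cancel' hstep.le, hCi, markCycle_eq_left_iff hab]
    rcases (Nat.succ_le_of_lt hi).lt_or_eq with h | h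
    · exact ⟨i + 1, h, rfl⟩
    · exact ⟨0, by omega, by rw [← Nat.succ_eq_add_one, h, hpm, hp0, Nat.cast_zero,
        ZMod.natCast_self]⟩
  · intro k hk hkd hCk
    rw [hcast, hCi, markCycle_eq_left_iff hab] at hCk
    obtain ⟨i', hi', h⟩ := hCk
    have h' := natCast_injOn_Iio N (hpm ▸ hp hi') (show p i + k < N by omega) h
    have := hp.lt_iff_lt.1 (show p i < p i' by omega)
    have := hp.lt_iff_lt.1 (show p i' < p (i + 1) by omega)
    omega

lemma card_filter_markCycle_cycleDist_eq [NeZero N] [DecidableEq A] (hab : a ≠ b)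
    (hp : StrictMono p) (hp0 : p 0 = 0) (hpm : p m = N) (v : ℕ) :
    #(univ.filter fun j : ZMod N =>
        markCycle p m a b j = a ∧ cycleDist (markCycle p m a b) j = v) =
      #((range m).filter fun i => p (i + 1) - p i = v) := by
  rw [← filter_filter, filter_markCycle_eq_left hab, filter_image,
    card_image_of_injOn ((injOn_natCast_of_strictMono hp hpm).mono (filter_subset _ _))]
  exact congrArg card <| filter_congr fun i hi => by
    rw [cycleDist_markCycle hab hp hp0 hpm (mem_range.1 hi)]

end markCycle

lemma exists_cycle_two_gaps {N : ℕ} [NeZero N] {A : Type*} [DecidableEq A] {a b : A}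
    (hab : a ≠ b) {m ℓ r : ℕ} (hℓ : 0 < ℓ) (hr : r < m) (hN : N = m * ℓ + r) :
    ∃ C : ZMod N → A, #(univ.filter (C · = a)) = m ∧
      #(univ.filter fun j => C j = a ∧ cycleDist C j = ℓ) = m - r ∧
      #(univ.filter fun j => C j = a ∧ cycleDist C j = ℓ + 1) = r := by
  set p : ℕ → ℕ := fun i => i * ℓ + min i r
  have hgap : ∀ i, p (i + 1) - p i = if i < r then ℓ + 1 else ℓ := fun i => by
    simp only [p, add_mul, one_mul]
    split_ifs <;> omega
  have hp : StrictMono p := strictMono_nat_of_lt_succ fun i => by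
    have := hgap i
    split_ifs at this <;> omega
  have hp0 : p 0 = 0 := by simp [p]
  have hpm : p m = N := by simp only [p, min_eq_right hr.le, hN]
  refine ⟨markCycle p m a b, ?_, ?_, ?_⟩
  · rw [filter_markCycle_eq_left hab, card_image_of_injOn (injOn_natCast_of_strictMono hp hpm),
      card_range]
  · rw [card_filter_markCycle_cycleDist_eq hab hp hp0 hpm, ← Nat.card_Ico r m]
    congr 1
    ext i
    simp only [mem_filter, mem_range, mem_Ico, hgap]
    split_ifs <;> omega
  · rw [card_filter_markCycle_cycleDist_eq hab hp hp0 hpm, ← card_range r]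
    congr 1
    ext i
    simp only [mem_filter, mem_range, hgap]
    split_ifs <;> omega

lemma admissible_of_card_filter_eq {N : ℕ} [NeZero N] {w : Fin 2 → ℕ} (hw : w 0 + w 1 = N)
    {C : ZMod N → Fin 2} {a : Fin 2} (ha : #(univ.filter (C · = a)) = w a) : Admissible w C := by
  have htotal : #(univ.filter (C · = 0)) + #(univ.filter (C · = 1)) = N := by
    rw [← Fin.sum_univ_two fun x => #(univ.filter (C · = x)),
      ← card_eq_sum_card_fiberwise fun _ _ => mem_univ _, card_univ, ZMod.card]
  intro x
  fin_cases a <;> fin_cases x <;> simp only [Fin.zero_eta, Fin.mk_one] at ha ⊢ <;> omega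

theorem submoment_min_binary_general (m₁ m₂ : ℕ) (h2 : 1 ≤ m₂) (h12 : m₂ ≤ m₁)
    (N : ℕ) (hN : N = m₁ + m₂) [NeZero N]
    (a : Fin 2) (ℓ u : ℕ) (hℓ : ℓ = N / ![m₁, m₂] a) (hu : u = ℓ + 1) :
    (∃ C : ZMod N → Fin 2, Admissible ![m₁, m₂] C ∧
       (Finset.univ.filter (fun j => C j = a ∧ cycleDist C j = ℓ)).card
         = ![m₁, m₂] a * u - N ∧
       (Finset.univ.filter (fun j => C j = a ∧ cycleDist C j = u)).card
         = N - ![m₁, m₂] a * ℓ) ∧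
    (∀ C : ZMod N → Fin 2, Admissible ![m₁, m₂] C →
       (Finset.univ.filter (fun j => C j = a ∧ cycleDist C j = ℓ)).card
         = ![m₁, m₂] a * u - N →
       (Finset.univ.filter (fun j => C j = a ∧ cycleDist C j = u)).card
         = N - ![m₁, m₂] a * ℓ →
       ∀ C' : ZMod N → Fin 2, Admissible ![m₁, m₂] C' →
         ∑ j ∈ Finset.univ.filter (fun j => C j = a), cycleDist C j ^ 2 ≤
           ∑ j ∈ Finset.univ.filter (fun j => C' j = a), cycleDist C' j ^ 2) := by
  subst hu
  set m := ![m₁, m₂] a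
  have hm : 0 < m ∧ m ≤ N := by fin_cases a <;> simp [m] <;> omega
  have hℓpos : 0 < ℓ := hℓ ▸ Nat.div_pos hm.2 hm.1
  have hdiv : N = m * ℓ + N % m := hℓ ▸ (Nat.div_add_mod N m).symm
  have hmod : N % m < m := Nat.mod_lt N hm.1
  have hmu : m * (ℓ + 1) = m * ℓ + m := mul_add_one m ℓ
  refine ⟨?_, fun C hC hCℓ hCu C' hC' => ?_⟩
  · obtain ⟨b, hb⟩ := exists_ne a
    obtain ⟨C, hCa, hCℓ, hCu⟩ := exists_cycle_two_gaps hb.symm hℓpos hmod hdiv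
    exact ⟨C, admissible_of_card_filter_eq (by simp [hN]) hCa, by omega, by omega⟩
  · have hnonempty : ∀ C : ZMod N → Fin 2, Admissible ![m₁, m₂] C →
        (univ.filter (C · = a)).Nonempty := fun C hC => card_pos.1 (hC a ▸ hm.1)
    have hdist : ∀ j ∈ univ.filter (C · = a), cycleDist C j = ℓ ∨ cycleDist C j = ℓ + 1 := by
      refine forall_or_of_card_filter_add_card_filter_eq (fun j _ h => by omega) ?_
      rw [filter_filter, filter_filter, hCℓ, hCu, hC a]
      omega
    refine sum_sq_le_sum_sq_of_forall_eq_or_eq ℓ (by rw [hC a, hC' a]) ?_ hdist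
    rw [sum_cycleDist_filter_eq C (hnonempty C hC), sum_cycleDist_filter_eq C' (hnonempty C' hC')]

/-- Sub-moment minimality of the two-value profile in the binary case: (i) an admissible cycle
realizing the two-value distance profile for symbol `a` exists, and (ii) any admissible cycle
with this profile minimizes the sum of squared distances over the instances of `a`. -/
theorem submoment_min_binary (m₁ m₂ : ℕ) (h2 : 1 ≤ m₂) (h12 : m₂ ≤ m₁)
    (N : ℕ) (hN : N = m₁ + m₂) [NeZero N]
    (a : Fin 2) (hndvd : ¬ ![m₁, m₂] a ∣ N)
    (ℓ u : ℕ) (hℓ : ℓ = N / ![m₁, m₂] a) (hu : u = ℓ + 1) :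
    (∃ C : ZMod N → Fin 2, Admissible ![m₁, m₂] C ∧
       (Finset.univ.filter (fun j => C j = a ∧ cycleDist C j = ℓ)).card
         = ![m₁, m₂] a * u - N ∧
       (Finset.univ.filter (fun j => C j = a ∧ cycleDist C j = u)).card
         = N - ![m₁, m₂] a * ℓ) ∧
    (∀ C : ZMod N → Fin 2, Admissible ![m₁, m₂] C →
       (Finset.univ.filter (fun j => C j = a ∧ cycleDist C j = ℓ)).card
         = ![m₁, m₂] a * u - N →
       (Finset.univ.filter (fun j => C j = a ∧ cycleDist C j = u)).card
         = N - ![m₁, m₂] a * ℓ →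
       ∀ C' : ZMod N → Fin 2, Admissible ![m₁, m₂] C' →
         ∑ j ∈ Finset.univ.filter (fun j => C j = a), cycleDist C j ^ 2 ≤
           ∑ j ∈ Finset.univ.filter (fun j => C' j = a), cycleDist C' j ^ 2) :=
  submoment_min_binary_general m₁ m₂ h2 h12 N hN a ℓ u hℓ hu
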